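/- Every symmetric Fano polygon P ⊂ ℚ² is minimal: for each long edge E of P with primitive inner normal u and height h, there is a point x ∈ P with u(x) ≥ h. -/

import Mathlib

abbrev Z2 := ℤ × ℤ
abbrev Q2 := ℚ × ℚ

/-- The canonical embedding of lattice points into `ℚ × ℚ`. -/
def toQ (v : Z2) : Q2 := ((v.1 : ℚ), (v.2 : ℚ))

/-- Pairing of a dual lattice vector with a rational point. -/
def dotQ (u : Z2) (x : Q2) : ℚ := (u.1 : ℚ) * x.1 + (u.2 : ℚ) * x.2

/-- A lattice vector is primitive if its coordinates are coprime. -/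
def IsPrimitive (v : Z2) : Prop := Int.gcd v.1 v.2 = 1

/-- Action of an integer matrix on `ℚ × ℚ`. -/
def applyM (G : Matrix (Fin 2) (Fin 2) ℤ) (x : Q2) : Q2 :=
  ((G 0 0 : ℚ) * x.1 + (G 0 1 : ℚ) * x.2, (G 1 0 : ℚ) * x.1 + (G 1 1 : ℚ) * x.2)

/-- Action of an integer matrix on `ℤ × ℤ`. -/
def applyZ (G : Matrix (Fin 2) (Fin 2) ℤ) (v : Z2) : Z2 :=
  (G 0 0 * v.1 + G 0 1 * v.2, G 1 0 * v.1 + G 1 1 * v.2)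

/-- The convex hull in `ℚ²` of a finite set of lattice points. -/
def hull (V : Finset Z2) : Set Q2 := convexHull ℚ (toQ '' (V : Set Z2))

/-- `V` is the vertex set of a Fano polygon: the origin is in the strict interior of the
convex hull, every vertex is primitive, and the points of `V` are exactly the vertices
(extreme points) of the hull. -/
def IsFanoPolygon (V : Finset Z2) : Prop :=
  (0 : Q2) ∈ interior (hull V) ∧
  (∀ v ∈ V, IsPrimitive v) ∧
  toQ '' (V : Set Z2) = Set.extremePoints ℚ (hull V)

/-- `E` is the edge of `P` with primitive inner normal `u` and height `h`:
`u ≥ -h` holds on `P`, with equality exactly on `E`, and `E` has more than one point. -/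
def IsEdge (P E : Set Q2) (u : Z2) (h : ℤ) : Prop :=
  IsPrimitive u ∧ 0 < h ∧
  (∀ x ∈ P, -(h : ℚ) ≤ dotQ u x) ∧
  E = {x ∈ P | dotQ u x = -(h : ℚ)} ∧
  ∃ a b, a ∈ E ∧ b ∈ E ∧ a ≠ b

/-- The lattice length of an edge: the number of lattice points on it minus one. -/
noncomputable def latticeLength (E : Set Q2) : ℕ :=
  Set.ncard {v : Z2 | toQ v ∈ E} - 1

/-- An edge is long if its lattice length is at least its height. -/
def IsLongEdge (P E : Set Q2) (u : Z2) (h : ℤ) : Prop :=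
  IsEdge P E u h ∧ h ≤ (latticeLength E : ℤ)

/-- `P` has a non-empty basket of R-singularities: some edge has lattice length
not a multiple of its height. -/
def HasRsing (P : Set Q2) : Prop :=
  ∃ E u h, IsEdge P E u h ∧ ¬ (h ∣ (latticeLength E : ℤ))

/-- Central symmetry: `P = -P`. -/
def CentSym (P : Set Q2) : Prop := ∀ x, x ∈ P ↔ -x ∈ P

/-- `G` is a lattice automorphism of `P`. -/
def IsAut (G : Matrix (Fin 2) (Fin 2) ℤ) (P : Set Q2) : Prop :=
  IsUnit G.det ∧ applyM G '' P = P

/-- `P` admits a lattice automorphism of order 3. -/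
def ThreeSym (P : Set Q2) : Prop := ∃ G, IsAut G P ∧ G ^ 3 = 1 ∧ G ≠ 1

/-- `P` is symmetric: the fixed-point set of its automorphism group is `{0}`. -/
def SymmetricPolygon (P : Set Q2) : Prop :=
  {x : Q2 | ∀ G, IsAut G P → applyM G x = x} = {0}
section Basic
abbrev M2 := Matrix (Fin 2) (Fin 2) ℤ

lemma toQ_inj : Function.Injective toQ := by
  intro a b h
  simp only [toQ, Prod.mk.injEq] at h
  exact Prod.ext (by exact_mod_cast h.1) (by exact_mod_cast h.2)

def dotZ (u v : Z2) : ℤ := u.1 * v.1 + u.2 * v.2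

lemma dotQ_toQ (u : Z2) (v : Z2) : dotQ u (toQ v) = (dotZ u v : ℚ) := by
  simp [dotQ, toQ, dotZ]

lemma applyM_toQ (G : M2) (v : Z2) : applyM G (toQ v) = toQ (applyZ G v) := by
  simp [applyM, toQ, applyZ]

lemma mul_entry (A B : M2) (i j : Fin 2) :
    (A * B) i j = A i 0 * B 0 j + A i 1 * B 1 j := by
  simp [Matrix.mul_apply, Fin.sum_univ_two]

lemma applyZ_mul (A B : M2) (v : Z2) :
    applyZ (A * B) v = applyZ A (applyZ B v) := by
  simp [applyZ, mul_entry]; constructor <;> ring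

lemma applyZ_one (v : Z2) : applyZ 1 v = v := by
  simp [applyZ, Matrix.one_apply]

lemma applyM_mul (A B : M2) (x : Q2) :
    applyM (A * B) x = applyM A (applyM B x) := by
  simp [applyM, mul_entry]; push_cast; constructor <;> ring

lemma applyM_one (x : Q2) : applyM 1 x = x := by
  simp [applyM, Matrix.one_apply]

lemma applyM_injective {G : M2} (h : IsUnit G.det) : Function.Injective (applyM G) := by
  intro x y hxy
  have hd : G.det ≠ 0 := h.ne_zero
  rw [Matrix.det_fin_two] at hd
  simp only [applyM, Prod.mk.injEq] at hxy
  obtain ⟨h1, h2⟩ := hxy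
  have hd' : ((G 0 0 : ℚ) * G 1 1 - G 0 1 * G 1 0) ≠ 0 := by
    intro hc; apply hd; exact_mod_cast hc
  have e1 : ((G 0 0 : ℚ) * G 1 1 - G 0 1 * G 1 0) * (x.1 - y.1) = 0 := by
    linear_combination (G 1 1 : ℚ) * h1 - (G 0 1 : ℚ) * h2
  have e2 : ((G 0 0 : ℚ) * G 1 1 - G 0 1 * G 1 0) * (x.2 - y.2) = 0 := by
    linear_combination (G 0 0 : ℚ) * h2 - (G 1 0 : ℚ) * h1
  exact Prod.ext (sub_eq_zero.1 ((mul_eq_zero.1 e1).resolve_left hd'))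
    (sub_eq_zero.1 ((mul_eq_zero.1 e2).resolve_left hd'))

lemma applyZ_injective {G : M2} (h : IsUnit G.det) : Function.Injective (applyZ G) := by
  intro a b hab
  have : applyM G (toQ a) = applyM G (toQ b) := by rw [applyM_toQ, applyM_toQ, hab]
  exact toQ_inj (applyM_injective h this)

lemma IsAut.one (P : Set Q2) : IsAut 1 P := by
  refine ⟨by simp, ?_⟩
  ext x; simp [applyM_one]

lemma IsAut.mul {A B : M2} {P : Set Q2} (hA : IsAut A P) (hB : IsAut B P) :
    IsAut (A * B) P := by
  refine ⟨by rw [Matrix.det_mul]; exact hA.1.mul hB.1, ?_⟩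
  have : applyM (A * B) '' P = applyM A '' (applyM B '' P) := by
    rw [Set.image_image]; exact Set.image_congr fun x _ => applyM_mul A B x
  rw [this, hB.2, hA.2]

lemma IsAut.pow {A : M2} {P : Set Q2} (hA : IsAut A P) (n : ℕ) : IsAut (A ^ n) P := by
  induction n with
  | zero => simpa using IsAut.one P
  | succ n ih => rw [pow_succ]; exact ih.mul hA

lemma IsAut.mem {A : M2} {P : Set Q2} (hA : IsAut A P) {x : Q2} (hx : x ∈ P) :
    applyM A x ∈ P := by
  rw [← hA.2]; exact ⟨x, hx, rfl⟩
end Basic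
section Alg
lemma ch2 (G : M2) : G * G = (G 0 0 + G 1 1) • G - G.det • (1 : M2) := by
  ext i j
  fin_cases i <;> fin_cases j <;>
    simp only [mul_entry, Matrix.det_fin_two, Matrix.sub_apply, Matrix.smul_apply,
      smul_eq_mul, Matrix.one_apply, if_true, if_false, Fin.isValue,
      Fin.zero_eta, Fin.mk_one, eq_self_iff_true, one_ne_zero, zero_ne_one,
      reduceIte, mul_one, mul_zero, sub_zero] <;> ring

/-- Chebyshev-like sequence. -/
def cheb (t : ℤ) : ℕ → ℤ
  | 0 => 0
  | 1 => 1
  | (n+2) => t * cheb t (n+1) - cheb t n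

lemma cheb_growth {t : ℤ} (ht : 2 ≤ |t|) : ∀ n, |cheb t n| < |cheb t (n+1)| := by
  intro n
  induction n using Nat.strong_induction_on with
  | _ n ih =>
    match n with
    | 0 => simp [cheb]
    | (m+1) =>
      have h1 : |cheb t m| < |cheb t (m+1)| := ih m (by omega)
      have h2 : cheb t (m+2) = t * cheb t (m+1) - cheb t m := rfl
      rw [h2]
      have habs : |t * cheb t (m+1)| = |t| * |cheb t (m+1)| := abs_mul _ _
      have h3 := abs_sub_abs_le_abs_sub (t * cheb t (m+1)) (cheb t m)
      nlinarith [abs_nonneg (cheb t (m+1)), abs_nonneg (cheb t m)]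

lemma pow_formula {R : M2} (hdet : R.det = 1) (t : ℤ) (ht : t = R 0 0 + R 1 1) :
    ∀ n : ℕ, R ^ (n+1) = cheb t (n+1) • R - cheb t n • (1 : M2) := by
  intro n
  induction n with
  | zero => simp [cheb]
  | succ n ih =>
    have hch : R * R = t • R - (1:ℤ) • (1 : M2) := by rw [ht, ← hdet]; exact ch2 R
    have h4 : R ^ (n+1+1) = (R ^ (n+1)) * R := by rw [pow_succ]
    rw [h4, ih]
    have hc : cheb t (n+2) = t * cheb t (n+1) - cheb t n := rfl
    rw [sub_mul, smul_mul_assoc, smul_mul_assoc, one_mul, hch, hc]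
    rw [smul_sub, smul_smul, smul_smul]
    module

lemma scalar_case {R : M2} (hdet : R.det = 1) {c d : ℤ} (hc : c ≠ 0)
    (h : c • R = d • (1 : M2)) : R = 1 ∨ R = -1 := by
  have key : ∀ i j : Fin 2, c * R i j = d * (1 : M2) i j := by
    intro i j
    have := congrArg (fun M => M i j) h
    simpa [Matrix.smul_apply, smul_eq_mul] using this
  have hb : R 0 1 = 0 := by
    have := key 0 1; simp [Matrix.one_apply] at this
    rcases this with h' | h'; · exact absurd h' hc
    · exact h'
  have hcc : R 1 0 = 0 := by
    have := key 1 0; simp [Matrix.one_apply] at this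
    rcases this with h' | h'; · exact absurd h' hc
    · exact h'
  have had : R 0 0 = R 1 1 := by
    have h1 := key 0 0; have h2 := key 1 1
    simp [Matrix.one_apply] at h1 h2
    exact mul_left_cancel₀ hc (h1.trans h2.symm)
  have hsq : R 0 0 * R 0 0 = 1 := by
    rw [Matrix.det_fin_two, hb, ← had] at hdet; linarith [hdet]
  rcases Int.eq_one_or_neg_one_of_mul_eq_one' hsq with ⟨h1, _⟩ | ⟨h1, _⟩
  · left; ext i j
    fin_cases i <;> fin_cases j <;> simp [hb, hcc, h1, ← had, Matrix.one_apply]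
  · right; ext i j
    fin_cases i <;> fin_cases j <;>
      simp [hb, hcc, h1, ← had, Matrix.neg_apply, Matrix.one_apply]
end Alg
section Classify
lemma classify {R : M2} (hdet : R.det = 1) (hR : R ≠ 1) {k : ℕ} (hk1 : 1 ≤ k)
    (hk : R ^ k = 1) : (R * R + R + 1 = 0) ∨ (∃ m : ℕ, R ^ m = -1) := by
  obtain ⟨t, ht⟩ : ∃ t, t = R 0 0 + R 1 1 := ⟨_, rfl⟩
  obtain ⟨k', rfl⟩ : ∃ k', k = k' + 1 := ⟨k - 1, by omega⟩
  have hpf := pow_formula hdet t ht k'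
  rw [hk] at hpf
  have e : cheb t (k'+1) • R - cheb t k' • (1 : M2) = 1 := hpf.symm
  have hpf' : cheb t (k'+1) • R = (cheb t k' + 1) • (1 : M2) := by
    rw [add_smul, one_smul]; exact sub_eq_iff_eq_add'.mp e
  by_cases hck : cheb t (k'+1) = 0
  · have h0 : (0:ℤ) = cheb t k' + 1 := by
      have := congrArg (fun M => M 0 0) hpf'
      simpa [hck, Matrix.smul_apply, Matrix.one_apply] using this
    have htle : |t| ≤ 1 := by
      by_contra hgt
      push_neg at hgt
      have hg := cheb_growth (t := t) (by omega) k'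
      rw [hck] at hg
      simp only [abs_zero] at hg
      have := abs_nonneg (cheb t k')
      omega
    have hch : R * R = t • R - (1:ℤ) • (1 : M2) := by rw [ht, ← hdet]; exact ch2 R
    obtain ⟨hl, hr⟩ := abs_le.mp htle
    interval_cases t
    · left; rw [hch]; module
    · right; exact ⟨2, by rw [pow_two, hch]; module⟩
    · right
      refine ⟨3, ?_⟩
      have h2 : R ^ 2 = R - 1 := by rw [pow_two, hch]; module
      rw [pow_succ, h2, sub_mul, one_mul, hch]
      module
  · have := scalar_case hdet hck (c := cheb t (k'+1)) (d := cheb t k' + 1) hpf'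
    rcases this with h1 | h1
    · exact absurd h1 hR
    · exact Or.inr ⟨1, by rw [pow_one, h1]⟩
end Classify
section Geom
lemma applyM_comb (G : M2) (a b : ℚ) (x y : Q2) :
    applyM G (a • x + b • y) = a • applyM G x + b • applyM G y := by
  simp only [applyM, Prod.smul_fst, Prod.smul_snd, Prod.fst_add, Prod.snd_add,
    Prod.smul_mk, Prod.mk_add_mk, smul_eq_mul, Prod.mk.injEq]
  constructor <;> ring

lemma extreme_map {G : M2} {P : Set Q2} (hG : IsAut G P) {x : Q2}
    (hx : x ∈ Set.extremePoints ℚ P) : applyM G x ∈ Set.extremePoints ℚ P := by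
  obtain ⟨hxP, hxe⟩ := hx
  refine ⟨hG.mem hxP, ?_⟩
  intro y hy z hz hseg
  obtain ⟨y', hy', rfl⟩ : ∃ y' ∈ P, applyM G y' = y := by
    rw [← hG.2] at hy; obtain ⟨y', h1, h2⟩ := hy; exact ⟨y', h1, h2⟩
  obtain ⟨z', hz', rfl⟩ : ∃ z' ∈ P, applyM G z' = z := by
    rw [← hG.2] at hz; obtain ⟨z', h1, h2⟩ := hz; exact ⟨z', h1, h2⟩
  obtain ⟨a, b, ha, hb, hab, hcomb⟩ := hseg
  have hinj := applyM_injective hG.1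
  have : applyM G (a • y' + b • z') = applyM G x := by
    rw [applyM_comb]; exact hcomb
  have hxseg : x ∈ openSegment ℚ y' z' := ⟨a, b, ha, hb, hab, hinj this⟩
  obtain h1 := hxe hy' hz' hxseg
  rw [h1]

lemma vertex_map {V : Finset Z2} (hF : IsFanoPolygon V) {G : M2}
    (hG : IsAut G (hull V)) {v : Z2} (hv : v ∈ V) : applyZ G v ∈ V := by
  have hve : toQ v ∈ Set.extremePoints ℚ (hull V) := by
    rw [← hF.2.2]; exact ⟨v, hv, rfl⟩
  have := extreme_map hG hve
  rw [applyM_toQ, ← hF.2.2] at this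
  obtain ⟨w, hw, hwe⟩ := this
  rwa [← toQ_inj hwe]

/-- A line through the origin has empty interior. -/
lemma line_not_interior {n : Z2} (hn : n ≠ 0) {S : Set Q2}
    (hS : S ⊆ {x : Q2 | (n.1 : ℚ) * x.1 + (n.2 : ℚ) * x.2 = 0}) :
    ¬ (0 : Q2) ∈ interior S := by
  intro h0
  rw [mem_interior_iff_mem_nhds, Metric.mem_nhds_iff] at h0
  obtain ⟨ε, hε, hball⟩ := h0
  set W : ℝ := |(n.1:ℝ)| + |(n.2:ℝ)| + 1 with hW
  have hWpos : (0:ℝ) < W := by positivity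
  obtain ⟨c, hc0, hcε⟩ := exists_rat_btwn (show (0:ℝ) < ε / W from div_pos hε hWpos)
  have hcpos : (0:ℚ) < c := by exact_mod_cast hc0
  have hcW : (c:ℝ) * W < ε := by
    rw [lt_div_iff₀ hWpos] at hcε; exact hcε
  set q : Q2 := (c * n.1, c * n.2) with hq
  have hqball : q ∈ Metric.ball (0 : Q2) ε := by
    rw [Metric.mem_ball, Prod.dist_eq]
    have d1 : dist q.1 (0:Q2).1 = |((c * n.1 : ℚ) : ℝ)| := by
      rw [Rat.dist_eq]; norm_num [hq, abs_mul]
    have d2 : dist q.2 (0:Q2).2 = |((c * n.2 : ℚ) : ℝ)| := by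
      rw [Rat.dist_eq]; norm_num [hq, abs_mul]
    rw [d1, d2]
    have hcr : (0:ℝ) ≤ (c:ℝ) := le_of_lt hc0
    have e1 : |((c * n.1 : ℚ) : ℝ)| = (c:ℝ) * |(n.1:ℝ)| := by
      push_cast; rw [abs_mul, abs_of_nonneg hcr]
    have e2 : |((c * n.2 : ℚ) : ℝ)| = (c:ℝ) * |(n.2:ℝ)| := by
      push_cast; rw [abs_mul, abs_of_nonneg hcr]
    rw [e1, e2]
    have hb1 : (c:ℝ) * |(n.1:ℝ)| < ε := by
      nlinarith [abs_nonneg ((n.1:ℝ)), abs_nonneg ((n.2:ℝ))]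
    have hb2 : (c:ℝ) * |(n.2:ℝ)| < ε := by
      nlinarith [abs_nonneg ((n.1:ℝ)), abs_nonneg ((n.2:ℝ))]
    exact max_lt hb1 hb2
  have hqS := hS (hball hqball)
  simp only [Set.mem_setOf_eq, hq] at hqS
  have hnn : (n.1:ℚ) * n.1 + (n.2:ℚ) * n.2 ≠ 0 := by
    intro hcon
    apply hn
    have h1 : (n.1:ℚ) = 0 ∧ (n.2:ℚ) = 0 := by
      constructor <;> nlinarith [sq_nonneg ((n.1:ℚ)), sq_nonneg ((n.2:ℚ))]
    exact Prod.ext (by exact_mod_cast h1.1) (by exact_mod_cast h1.2)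
  apply hnn
  have hz : c * ((n.1:ℚ) * n.1 + (n.2:ℚ) * n.2) = 0 := by linarith [hqS]
  exact (mul_eq_zero.1 hz).resolve_left (ne_of_gt hcpos)
end Geom
section Order
lemma convex_line (a b : ℚ) : Convex ℚ {x : Q2 | a * x.1 + b * x.2 = 0} := by
  intro x hx y hy s t hs ht hst
  simp only [Set.mem_setOf_eq, Prod.fst_add, Prod.snd_add, Prod.smul_fst,
    Prod.smul_snd, smul_eq_mul] at *
  linear_combination s * hx + t * hy

lemma applyZ_pow (G : M2) : ∀ (n : ℕ) (v : Z2), applyZ (G ^ n) v = (applyZ G)^[n] v := by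
  intro n
  induction n with
  | zero => intro v; simp [applyZ_one]
  | succ n ih =>
    intro v
    rw [pow_succ, applyZ_mul, ih, Function.iterate_succ_apply]

lemma finite_order {V : Finset Z2} (hF : IsFanoPolygon V) {G : M2}
    (hG : IsAut G (hull V)) : ∃ k : ℕ, 1 ≤ k ∧ G ^ k = 1 := by
  classical
  set f := applyZ G with hf
  have hinj : Function.Injective f := applyZ_injective hG.1
  have hmaps : ∀ v ∈ V, f v ∈ V := fun v hv => vertex_map hF hG hv
  have hiter : ∀ (n : ℕ) (v : Z2), v ∈ V → f^[n] v ∈ V := by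
    intro n
    induction n with
    | zero => intro v hv; simpa using hv
    | succ n ih => intro v hv; rw [Function.iterate_succ_apply]; exact ih _ (hmaps v hv)
  have hper : ∀ v ∈ V, ∃ k : ℕ, 1 ≤ k ∧ f^[k] v = v := by
    intro v hv
    have hcard : V.card < (Finset.range (V.card + 1)).card := by
      rw [Finset.card_range]; omega
    obtain ⟨m, _, n, _, hmn, heq⟩ :=
      Finset.exists_ne_map_eq_of_card_lt_of_maps_to hcard
        (fun n _ => hiter n v hv)
    rcases Nat.lt_or_ge m n with hlt | hge
    · refine ⟨n - m, by omega, ?_⟩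
      have : f^[m] (f^[n - m] v) = f^[m] v := by
        rw [← Function.iterate_add_apply]
        rw [show m + (n - m) = n by omega, heq]
      exact hinj.iterate m this
    · have hlt : n < m := by omega
      refine ⟨m - n, by omega, ?_⟩
      have : f^[n] (f^[m - n] v) = f^[n] v := by
        rw [← Function.iterate_add_apply]
        rw [show n + (m - n) = m by omega, ← heq]
      exact hinj.iterate n this
  choose! K hK1 hK2 using hper
  set k : ℕ := ∏ v ∈ V, K v with hk
  have hVne : V.Nonempty := by
    by_contra hemp
    rw [Finset.not_nonempty_iff_eq_empty] at hemp
    have : hull V = ∅ := by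
      rw [hemp, hull]; simp [convexHull_empty]
    have h0 := hF.1
    rw [this] at h0
    simp at h0
  have hk1 : 1 ≤ k := by
    rw [hk]
    apply Finset.one_le_prod'
    intro v hv; exact hK1 v hv
  have hfix : ∀ v ∈ V, f^[k] v = v := by
    intro v hv
    obtain ⟨m, hm⟩ : K v ∣ k := Finset.dvd_prod_of_mem K hv
    rw [hm, Function.iterate_mul]
    exact Function.iterate_fixed (hK2 v hv) m
  refine ⟨k, hk1, ?_⟩
  set N : M2 := G ^ k with hN
  have hNv : ∀ v ∈ V, applyZ N v = v := by
    intro v hv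
    rw [hN, applyZ_pow]; exact hfix v hv
  by_contra hne
  have hrow : ∀ (a b : ℤ), (a, b) ≠ (0, 0) → (∀ v ∈ V, a * v.1 + b * v.2 = 0) → False := by
    intro a b hab hall
    have hsub : hull V ⊆ {x : Q2 | ((a, b).1 : ℚ) * x.1 + ((a, b).2 : ℚ) * x.2 = 0} := by
      apply convexHull_min _ (convex_line _ _)
      rintro x ⟨v, hv, rfl⟩
      have := hall v hv
      simp only [Set.mem_setOf_eq, toQ]
      exact_mod_cast congrArg (fun z : ℤ => (z : ℚ)) this
    exact line_not_interior hab hsub hF.1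
  have hr0 : (N 0 0 - 1, N 0 1) = ((0:ℤ), (0:ℤ)) := by
    by_contra hc
    exact hrow _ _ hc (fun v hv => by
      have := congrArg Prod.fst (hNv v hv)
      simp only [applyZ] at this
      linarith [this])
  have hr1 : (N 1 0, N 1 1 - 1) = ((0:ℤ), (0:ℤ)) := by
    by_contra hc
    exact hrow _ _ hc (fun v hv => by
      have := congrArg Prod.snd (hNv v hv)
      simp only [applyZ] at this
      linarith [this])
  apply hne
  have e00 : N 0 0 = 1 := by have := congrArg Prod.fst hr0; simp at this; linarith
  have e01 : N 0 1 = 0 := congrArg Prod.snd hr0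
  have e10 : N 1 0 = 0 := congrArg Prod.fst hr1
  have e11 : N 1 1 = 1 := by have := congrArg Prod.snd hr1; simp at this; linarith
  show N = 1
  ext i j
  fin_cases i <;> fin_cases j <;> simp [e00, e01, e10, e11, Matrix.one_apply]
end Order
section Dich
lemma dichotomy {V : Finset Z2} (hF : IsFanoPolygon V) (hS : SymmetricPolygon (hull V)) :
    IsAut (-1) (hull V) ∨ ∃ R, IsAut R (hull V) ∧ R * R + R + 1 = 0 := by
  classical
  by_cases hex : ∃ R, IsAut R (hull V) ∧ R.det = 1 ∧ R ≠ 1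
  · obtain ⟨R, hR, hdet, hne⟩ := hex
    obtain ⟨k, hk1, hk⟩ := finite_order hF hR
    rcases classify hdet hne hk1 hk with h | ⟨m, hm⟩
    · exact Or.inr ⟨R, hR, h⟩
    · left; rw [← hm]; exact hR.pow m
  · exfalso
    push_neg at hex
    have h10 : (((1:ℚ), (0:ℚ)) : Q2) ∈ ({x : Q2 | ∀ G, IsAut G (hull V) → applyM G x = x}) →
        False := by
      intro hmem
      rw [hS] at hmem
      simp only [Set.mem_singleton_iff, Prod.ext_iff] at hmem
      exact one_ne_zero hmem.1
    have hGex : ∃ G, IsAut G (hull V) ∧ applyM G ((1:ℚ), (0:ℚ)) ≠ ((1:ℚ), (0:ℚ)) := by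
      by_contra hc
      push_neg at hc
      exact h10 (fun G hG => hc G hG)
    obtain ⟨G, hG, hGne⟩ := hGex
    have hGne1 : G ≠ 1 := by
      intro h; rw [h] at hGne; exact hGne (applyM_one _)
    have hdetG : G.det = -1 := by
      rcases Int.isUnit_iff.1 hG.1 with h | h
      · exact absurd (hex G hG h) hGne1
      · exact h
    have hGG : G * G = 1 := by
      apply hex (G * G) (hG.mul hG)
      rw [Matrix.det_mul, hdetG]; ring
    -- trace is zero
    have hch := ch2 G
    rw [hGG, hdetG] at hch
    have htr : G 0 0 + G 1 1 = 0 := by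
      by_contra htne
      have hzero : ∀ i j : Fin 2, G i j = 0 := by
        intro i j
        have := congrArg (fun M => M i j) hch
        simp only [Matrix.smul_apply, Matrix.sub_apply, Matrix.one_apply,
          smul_eq_mul, neg_smul, one_smul, Matrix.neg_apply] at this
        rcases Decidable.em (i = j) with he | he
        · subst he
          simp at this
          exact this.resolve_left htne
        · simp [he] at this
          exact this.resolve_left htne
      rw [Matrix.det_fin_two, hzero 0 0, hzero 0 1] at hdetG
      simp at hdetG
    have hdet2 : G 0 0 * G 0 0 + G 0 1 * G 1 0 = 1 := by
      rw [Matrix.det_fin_two] at hdetG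
      have h11 : G 1 1 = -(G 0 0) := by linarith
      rw [h11] at hdetG; nlinarith [hdetG]
    have h11 : G 1 1 = -(G 0 0) := by linarith
    -- fixed vector
    obtain ⟨w, hwne, hwfix⟩ : ∃ w : Z2, w ≠ 0 ∧ applyZ G w = w := by
      by_cases hb : (G 0 1, 1 - G 0 0) = ((0:ℤ), (0:ℤ))
      · have ha : G 0 0 = 1 := by
          have := congrArg Prod.snd hb; simp at this; linarith
        refine ⟨(1 + G 0 0, G 1 0), ?_, ?_⟩
        · intro hc
          have h1 := congrArg Prod.fst hc
          simp only [ha] at h1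
          exact absurd h1 (by norm_num)
        · have hb1 : G 0 1 = 0 := congrArg Prod.fst hb
          simp only [applyZ, h11, hb1, ha, Prod.mk.injEq]
          constructor <;> ring
      · refine ⟨(G 0 1, 1 - G 0 0), hb, ?_⟩
        simp only [applyZ, h11, Prod.mk.injEq]
        constructor
        · ring
        · nlinarith [hdet2]
    have hall : ∀ H, IsAut H (hull V) → applyM H (toQ w) = toQ w := by
      intro H hH
      by_cases hH1 : H = 1
      · rw [hH1]; exact applyM_one _
      · have hdetH : H.det = -1 := by
          rcases Int.isUnit_iff.1 hH.1 with h | h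
          · exact absurd (hex H hH h) hH1
          · exact h
        have hGH : G * H = 1 := by
          apply hex (G * H) (hG.mul hH)
          rw [Matrix.det_mul, hdetG, hdetH]; ring
        have hHG : H = G := by
          have : G * (G * H) = G * 1 := by rw [hGH]
          rw [← mul_assoc, hGG, one_mul, mul_one] at this
          exact this
        rw [hHG, applyM_toQ, hwfix]
    have : toQ w ∈ ({x : Q2 | ∀ G, IsAut G (hull V) → applyM G x = x}) := hall
    rw [hS] at this
    simp only [Set.mem_singleton_iff] at this
    apply hwne
    have : toQ w = toQ (0, 0) := by rw [this]; simp [toQ]; rfl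
    exact toQ_inj this
end Dich
section Main
lemma dotZ_add (u x y : Z2) : dotZ u (x + y) = dotZ u x + dotZ u y := by
  simp only [dotZ, Prod.fst_add, Prod.snd_add]; ring

lemma kernel_lemma {u : Z2} (hu : IsPrimitive u) {d : Z2} (hd : dotZ u d = 0) :
    ∃ k : ℤ, d.1 = -u.2 * k ∧ d.2 = u.1 * k := by
  have hco : IsCoprime u.1 u.2 := Int.isCoprime_iff_gcd_eq_one.2 hu
  obtain ⟨α, β, hαβ⟩ := hco
  refine ⟨α * d.2 - β * d.1, ?_, ?_⟩
  · have hd' : u.1 * d.1 + u.2 * d.2 = 0 := hd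
    linear_combination (-d.1) * hαβ + α * hd'
  · have hd' : u.1 * d.1 + u.2 * d.2 = 0 := hd
    linear_combination (-d.2) * hαβ + β * hd'

lemma e_ne_zero {u : Z2} (hu : IsPrimitive u) : ¬(u.1 = 0 ∧ u.2 = 0) := by
  rintro ⟨h1, h2⟩
  unfold IsPrimitive at hu
  rw [h1, h2] at hu
  simp [Int.gcd] at hu

set_option maxHeartbeats 2000000 in
/-- Every symmetric Fano polygon is minimal: for each long edge with primitive inner
normal `u` and height `h`, some point `x ∈ P` satisfies `u(x) ≥ h`. -/
theorem stmt_12 (V : Finset Z2) (hF : IsFanoPolygon V)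
    (hS : SymmetricPolygon (hull V)) :
    ∀ E u h, IsLongEdge (hull V) E u h →
      ∃ x ∈ hull V, (h : ℚ) ≤ dotQ u x := by
  classical
  intro E u h hLE
  obtain ⟨⟨hprim, hpos, hlb, hEeq, a0, b0, ha0, hb0, hne0⟩, hlen⟩ := hLE
  rcases dichotomy hF hS with hneg | ⟨R, hRaut, hR3⟩
  · -- centrally symmetric case
    have haP : a0 ∈ hull V := by rw [hEeq] at ha0; exact ha0.1
    have haE : dotQ u a0 = -(h:ℚ) := by rw [hEeq] at ha0; exact ha0.2
    refine ⟨applyM (-1) a0, hneg.mem haP, ?_⟩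
    have : applyM (-1) a0 = (-a0.1, -a0.2) := by
      simp [applyM, Matrix.neg_apply, Matrix.one_apply]
    rw [this]
    simp only [dotQ]
    rw [dotQ] at haE
    linarith [haE]
  · -- order three case
    by_contra hcon
    push_neg at hcon
    -- integer bound on lattice points of P
    have hbound : ∀ w : Z2, toQ w ∈ hull V → dotZ u w ≤ h - 1 := by
      intro w hw
      have := hcon (toQ w) hw
      rw [dotQ_toQ] at this
      have : (dotZ u w : ℚ) < (h : ℚ) := this
      have : dotZ u w < h := by exact_mod_cast this
      omega
    -- lattice points on E
    set S : Set Z2 := {v : Z2 | toQ v ∈ E} with hs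
    have hSsub : ∀ v ∈ S, toQ v ∈ hull V ∧ dotZ u v = -h := by
      intro v hv
      rw [hs, Set.mem_setOf_eq, hEeq] at hv
      refine ⟨hv.1, ?_⟩
      have := hv.2
      rw [dotQ_toQ] at this
      exact_mod_cast this
    have hScard : h + 1 ≤ (S.ncard : ℤ) := by
      unfold latticeLength at hlen
      rw [← hs] at hlen
      rcases Nat.eq_zero_or_pos S.ncard with h0 | hp
      · rw [h0] at hlen; simp at hlen; omega
      · have : (S.ncard - 1 : ℕ) = S.ncard - 1 := rfl
        omega
    have hSfin : S.Finite := by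
      by_contra hinf
      have hinf' : S.Infinite := hinf
      rw [hinf'.ncard] at hScard
      omega
    -- coordinates on the edge
    obtain ⟨α, β, hαβ⟩ := Int.isCoprime_iff_gcd_eq_one.2 hprim
    set Fs := hSfin.toFinset with hFs
    have hFsne : Fs.Nonempty := by
      rw [hFs, Set.Finite.toFinset_nonempty]
      exact Set.nonempty_of_ncard_ne_zero (by omega)
    obtain ⟨v0, hv0⟩ := hFsne
    have hv0S : v0 ∈ S := (Set.Finite.mem_toFinset hSfin).1 hv0
    set key : Z2 → ℤ := fun v => α * (v.2 - v0.2) - β * (v.1 - v0.1) with hkey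
    have hkeyco : ∀ v ∈ S, v.1 - v0.1 = -u.2 * key v ∧ v.2 - v0.2 = u.1 * key v := by
      intro v hv
      have h1 : dotZ u v = -h := (hSsub v hv).2
      have h2 : dotZ u v0 = -h := (hSsub v0 hv0S).2
      have hd : dotZ u (v - v0) = 0 := by
        simp only [dotZ, Prod.fst_sub, Prod.snd_sub] at *
        ring_nf
        ring_nf at h1 h2
        linarith
      have hd' : u.1 * (v.1 - v0.1) + u.2 * (v.2 - v0.2) = 0 := hd
      constructor
      · linear_combination (-(v.1 - v0.1)) * hαβ + α * hd'
      · linear_combination (-(v.2 - v0.2)) * hαβ + β * hd'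
    have hkeyinj : Set.InjOn key Fs := by
      intro x hx y hy hxy
      have hxS : x ∈ S := (Set.Finite.mem_toFinset hSfin).1 hx
      have hyS : y ∈ S := (Set.Finite.mem_toFinset hSfin).1 hy
      obtain ⟨hx1, hx2⟩ := hkeyco x hxS
      obtain ⟨hy1, hy2⟩ := hkeyco y hyS
      apply Prod.ext
      · rw [hxy] at hx1; omega
      · rw [hxy] at hx2; omega
    set T := Fs.image key with hT
    have hTcard : T.card = Fs.card := Finset.card_image_of_injOn hkeyinj
    have hTne : T.Nonempty := ⟨key v0, Finset.mem_image_of_mem key hv0⟩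
    set m := T.min' hTne with hm
    set M := T.max' hTne with hM
    have hsubIcc : T ⊆ Finset.Icc m M := by
      intro x hx
      rw [Finset.mem_Icc]
      exact ⟨T.min'_le x hx, T.le_max' x hx⟩
    have hIcc := Finset.card_le_card hsubIcc
    rw [Int.card_Icc] at hIcc
    have hFscard : (Fs.card : ℤ) = (S.ncard : ℤ) := by
      rw [hFs, Set.ncard_eq_toFinset_card S hSfin]
    have hMm : h ≤ M - m := by
      have h1 : (T.card : ℤ) ≤ (M + 1 - m).toNat := by exact_mod_cast hIcc
      rcases le_or_gt (M + 1 - m) 0 with hle | hlt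
      · rw [Int.toNat_of_nonpos hle] at h1
        simp at h1
        omega
      · rw [Int.toNat_of_nonneg (le_of_lt hlt)] at h1
        rw [hTcard] at h1
        omega
    obtain ⟨a, haFs, hka⟩ := Finset.mem_image.1 (T.min'_mem hTne)
    obtain ⟨b, hbFs, hkb⟩ := Finset.mem_image.1 (T.max'_mem hTne)
    have haS : a ∈ S := (Set.Finite.mem_toFinset hSfin).1 haFs
    have hbS : b ∈ S := (Set.Finite.mem_toFinset hSfin).1 hbFs
    set N := M - m with hN
    have hNh : h ≤ N := hMm
    have hba : b.1 - a.1 = -u.2 * N ∧ b.2 - a.2 = u.1 * N := by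
      obtain ⟨ha1, ha2⟩ := hkeyco a haS
      obtain ⟨hb1, hb2⟩ := hkeyco b hbS
      constructor
      · rw [hka] at ha1 ha2; rw [hkb] at hb1 hb2; rw [hN]; nlinarith [ha1, hb1]
      · rw [hka] at ha1 ha2; rw [hkb] at hb1 hb2; rw [hN]; nlinarith [ha2, hb2]
    -- entry identities of R
    have hent : ∀ i j : Fin 2, (R * R) i j + R i j + (1 : M2) i j = 0 := by
      intro i j
      have := congrArg (fun X => X i j) hR3
      simpa [Matrix.add_apply, Matrix.zero_apply] using this
    have h00 : R 0 0 * R 0 0 + R 0 1 * R 1 0 + R 0 0 + 1 = 0 := by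
      have := hent 0 0; rw [mul_entry] at this; simpa [Matrix.one_apply] using this
    have h01 : R 0 0 * R 0 1 + R 0 1 * R 1 1 + R 0 1 = 0 := by
      have := hent 0 1; rw [mul_entry] at this; simpa [Matrix.one_apply] using this
    have h10 : R 1 0 * R 0 0 + R 1 1 * R 1 0 + R 1 0 = 0 := by
      have := hent 1 0; rw [mul_entry] at this; simpa [Matrix.one_apply] using this
    have h11 : R 1 0 * R 0 1 + R 1 1 * R 1 1 + R 1 1 + 1 = 0 := by
      have := hent 1 1; rw [mul_entry] at this; simpa [Matrix.one_apply] using this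
    have sum3 : ∀ v : Z2, dotZ u (applyZ R (applyZ R v)) + dotZ u (applyZ R v) + dotZ u v = 0 := by
      intro v
      simp only [dotZ, applyZ]
      linear_combination (u.1 * v.1) * h00 + (u.1 * v.2) * h01 + (u.2 * v.1) * h10 +
        (u.2 * v.2) * h11
    -- memberships
    have hmem1 : ∀ w : Z2, toQ w ∈ hull V → toQ (applyZ R w) ∈ hull V := by
      intro w hw
      rw [← applyM_toQ]
      exact hRaut.mem hw
    -- d is nonzero
    set ee : Z2 := (-u.2, u.1) with hee
    set d := dotZ u (applyZ R ee) with hd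
    have hdnz : d ≠ 0 := by
      intro hd0
      obtain ⟨k, hk1, hk2⟩ := kernel_lemma hprim (d := applyZ R ee) hd0
      have hk1' : R 0 0 * (-u.2) + R 0 1 * u.1 = -u.2 * k := by
        simpa [applyZ, hee] using hk1
      have hk2' : R 1 0 * (-u.2) + R 1 1 * u.1 = u.1 * k := by
        simpa [applyZ, hee] using hk2
      have hfac1 : (k * k + k + 1) * (-u.2) = 0 := by
        linear_combination (-u.2) * h00 + u.1 * h01 - (R 0 0 + 1 + k) * hk1' - R 0 1 * hk2'
      have hfac2 : (k * k + k + 1) * u.1 = 0 := by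
        linear_combination (-u.2) * h10 + u.1 * h11 - R 1 0 * hk1' - (R 1 1 + 1 + k) * hk2'
      have hkpos : 0 < k * k + k + 1 := by nlinarith [sq_nonneg (2*k + 1)]
      have hq : ¬(u.1 = 0 ∧ u.2 = 0) := e_ne_zero hprim
      have hu2 : u.2 = 0 := by
        rcases mul_eq_zero.1 hfac1 with hc' | hc' <;> omega
      have hu1 : u.1 = 0 := by
        rcases mul_eq_zero.1 hfac2 with hc' | hc'
        · omega
        · exact hc'
      exact hq ⟨hu1, hu2⟩
    -- the four values
    have haP : toQ a ∈ hull V := (hSsub a haS).1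
    have hbP : toQ b ∈ hull V := (hSsub b hbS).1
    have hA1le := hbound _ (hmem1 a haP)
    have hA2le := hbound _ (hmem1 _ (hmem1 a haP))
    have hB1le := hbound _ (hmem1 b hbP)
    have hB2le := hbound _ (hmem1 _ (hmem1 b hbP))
    have hsa := sum3 a
    have hsb := sum3 b
    rw [(hSsub a haS).2] at hsa
    rw [(hSsub b hbS).2] at hsb
    -- difference identity
    have hdiff : dotZ u (applyZ R b) - dotZ u (applyZ R a) = N * d := by
      simp only [dotZ, applyZ, hd, hee]
      have hb1 : b.1 = a.1 + (-u.2) * N := by linarith [hba.1]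
      have hb2 : b.2 = a.2 + u.1 * N := by linarith [hba.2]
      rw [hb1, hb2]; ring
    rcases lt_or_gt_of_ne hdnz with hdneg | hdpos
    · -- d ≤ -1 : A1 = B1 - N d ≥ 1 + N*1
      nlinarith [hsa, hsb, hA1le, hA2le, hB1le, hB2le, hdiff, hNh, hpos, hdneg]
    · nlinarith [hsa, hsb, hA1le, hA2le, hB1le, hB2le, hdiff, hNh, hpos, hdpos]
end Main
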